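/- Let γ(s,t) be an arclength-parametrized inextensible flow of pseudo null curves in E⁴₁ with pseudo null Frenet frame {T, N, B₁, B₂}, curvatures k₁ = 1, k₂, k₃, flow ∂γ/∂t = α₁T + α₂N + α₃B₁ + α₄B₂ (so ∂α₁/∂s = α₄), ψ₁ = ⟨∂N/∂t, B₁⟩ and ψ₂ = ⟨∂N/∂t, B₂⟩. Then the second curvature satisfies the evolution equation ∂k₂/∂t = ∂ψ₁/∂s + ψ₂k₂. -/

import Mathlib

/-!
Formalization of inextensible flows of partially null / pseudo null curves in
Minkowski space-time `E⁴₁` (ℝ⁴ with signature (-,+,+,+)).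
-/

noncomputable section

/-- The Minkowski bilinear form on `ℝ⁴` with signature `(-,+,+,+)`. -/
def mink (v w : Fin 4 → ℝ) : ℝ :=
  -(v 0 * w 0) + v 1 * w 1 + v 2 * w 2 + v 3 * w 3

/-- The Minkowski norm `‖v‖ = √|⟨v,v⟩|`. -/
def mnorm (v : Fin 4 → ℝ) : ℝ := Real.sqrt |mink v v|

/-! Since `∂ₛN = k₂ B₁` and `⟨B₁, B₁⟩ = 1`, we have `k₂ = ⟨∂ₛN, B₁⟩`, so
`∂ₜk₂ = ⟨∂ₜ∂ₛN, B₁⟩ + k₂ ⟨B₁, ∂ₜB₁⟩ = ⟨∂ₜ∂ₛN, B₁⟩`. On the other side,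
`∂ₛψ₁ = ⟨∂ₛ∂ₜN, B₁⟩ + ⟨∂ₜN, k₃ N - k₂ B₂⟩ = ⟨∂ₛ∂ₜN, B₁⟩ - k₂ ψ₂`, because `⟨∂ₜN, N⟩ = 0`
for the null field `N`. The two mixed partials of `N` agree since `N` is `C²`. -/

lemma mink_comm (v w : Fin 4 → ℝ) : mink v w = mink w v := by
  simp only [mink]; ring

lemma mink_smul_left (a : ℝ) (v w : Fin 4 → ℝ) : mink (a • v) w = a * mink v w := by
  simp only [mink, Pi.smul_apply, smul_eq_mul]; ring

lemma mink_smul_right (a : ℝ) (v w : Fin 4 → ℝ) : mink v (a • w) = a * mink v w := by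
  rw [mink_comm, mink_smul_left, mink_comm]

lemma mink_sub_right (v w u : Fin 4 → ℝ) : mink v (w - u) = mink v w - mink v u := by
  simp only [mink, Pi.sub_apply]; ring

lemma HasDerivAt.mink {f g : ℝ → Fin 4 → ℝ} {f' g' : Fin 4 → ℝ} {x : ℝ}
    (hf : HasDerivAt f f' x) (hg : HasDerivAt g g' x) :
    HasDerivAt (fun u => mink (f u) (g u)) (mink f' (g x) + mink (f x) g') x := by
  have hfi : ∀ i, HasDerivAt (fun u => f u i) (f' i) x := hasDerivAt_pi.1 hf
  have hgi : ∀ i, HasDerivAt (fun u => g u i) (g' i) x := hasDerivAt_pi.1 hg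
  refine ((((hfi 0).mul (hgi 0)).neg.add ((hfi 1).mul (hgi 1))).add
      ((hfi 2).mul (hgi 2))).add ((hfi 3).mul (hgi 3)) |>.congr_deriv ?_
  simp only [_root_.mink]; ring

lemma HasDerivAt.mink_eq_zero_of_mink_self_const {f : ℝ → Fin 4 → ℝ} {f' : Fin 4 → ℝ}
    {x c : ℝ} (hf : HasDerivAt f f' x) (hc : ∀ u, _root_.mink (f u) (f u) = c) :
    _root_.mink (f x) f' = 0 := by
  have h := (hf.mink hf).unique (by simpa only [hc] using hasDerivAt_const x c)
  rw [_root_.mink_comm f'] at h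
  linarith

lemma hasDerivAt_coeff_of_eq_smul {k : ℝ → ℝ} {f e : ℝ → Fin 4 → ℝ} {f' e' : Fin 4 → ℝ}
    {x : ℝ} (hf : HasDerivAt f f' x) (he : HasDerivAt e e' x)
    (hfe : ∀ u, f u = k u • e u) (hee : ∀ u, mink (e u) (e u) = 1) :
    HasDerivAt k (mink f' (e x)) x := by
  have hk : k = fun u => mink (f u) (e u) := by
    funext u; rw [hfe, mink_smul_left, hee, mul_one]
  have he_e' : mink (e x) e' = 0 := he.mink_eq_zero_of_mink_self_const hee
  simpa only [← hk, hfe x, mink_smul_left, he_e', mul_zero, add_zero] using hf.mink he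

section PartialDerivatives

variable {E : Type*} [NormedAddCommGroup E] [NormedSpace ℝ E] {F : ℝ → ℝ → E}

lemma hasDerivAt_fst_of_differentiable
    (hF : Differentiable ℝ (fun p : ℝ × ℝ => F p.1 p.2)) (s t : ℝ) :
    HasDerivAt (fun x => F x t) (fderiv ℝ (fun p : ℝ × ℝ => F p.1 p.2) (s, t) (1, 0)) s :=
  ((hF (s, t)).hasFDerivAt.comp_hasDerivAt s ((hasDerivAt_id' s).prodMk (hasDerivAt_const s t)) :)

lemma hasDerivAt_snd_of_differentiable
    (hF : Differentiable ℝ (fun p : ℝ × ℝ => F p.1 p.2)) (s t : ℝ) :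
    HasDerivAt (fun y => F s y) (fderiv ℝ (fun p : ℝ × ℝ => F p.1 p.2) (s, t) (0, 1)) t :=
  ((hF (s, t)).hasFDerivAt.comp_hasDerivAt t ((hasDerivAt_const t s).prodMk (hasDerivAt_id' t)) :)

lemma hasDerivAt_deriv_snd_of_contDiff (hF : ContDiff ℝ 2 (fun p : ℝ × ℝ => F p.1 p.2))
    (s t : ℝ) :
    HasDerivAt (fun x => deriv (fun y => F x y) t)
      (fderiv ℝ (fderiv ℝ (fun p : ℝ × ℝ => F p.1 p.2)) (s, t) (1, 0) (0, 1)) s := by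
  have hF' : Differentiable ℝ (fderiv ℝ (fun p : ℝ × ℝ => F p.1 p.2)) :=
    (hF.fderiv_right (m := 1) le_rfl).differentiable one_ne_zero
  have hpartial : (fun x => deriv (fun y => F x y) t) =
      fun x => fderiv ℝ (fun p : ℝ × ℝ => F p.1 p.2) (x, t) (0, 1) :=
    funext fun x => (hasDerivAt_snd_of_differentiable (hF.differentiable two_ne_zero) x t).deriv
  rw [hpartial]
  exact (hasDerivAt_fst_of_differentiable
    (F := fun x y => fderiv ℝ (fun p : ℝ × ℝ => F p.1 p.2) (x, y)) hF' s t).clm_apply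
    (hasDerivAt_const s _) |>.congr_deriv (by simp)

lemma hasDerivAt_deriv_fst_of_contDiff (hF : ContDiff ℝ 2 (fun p : ℝ × ℝ => F p.1 p.2))
    (s t : ℝ) :
    HasDerivAt (fun y => deriv (fun x => F x y) s)
      (fderiv ℝ (fderiv ℝ (fun p : ℝ × ℝ => F p.1 p.2)) (s, t) (1, 0) (0, 1)) t := by
  have hF' : Differentiable ℝ (fderiv ℝ (fun p : ℝ × ℝ => F p.1 p.2)) :=
    (hF.fderiv_right (m := 1) le_rfl).differentiable one_ne_zero
  have hpartial : (fun y => deriv (fun x => F x y) s) =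
      fun y => fderiv ℝ (fun p : ℝ × ℝ => F p.1 p.2) (s, y) (1, 0) :=
    funext fun y => (hasDerivAt_fst_of_differentiable (hF.differentiable two_ne_zero) s y).deriv
  rw [hpartial, (hF.contDiffAt.isSymmSndFDerivAt (by simp)) (1, 0) (0, 1)]
  exact (hasDerivAt_snd_of_differentiable
    (F := fun x y => fderiv ℝ (fun p : ℝ × ℝ => F p.1 p.2) (x, y)) hF' s t).clm_apply
    (hasDerivAt_const t _) |>.congr_deriv (by simp)

end PartialDerivatives

theorem curvature_evolution_k2_pseudo_null_general
    (N B₁ B₂ : ℝ → ℝ → (Fin 4 → ℝ))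
    (k₂ k₃ : ℝ → ℝ → ℝ)
    (ψ₁ ψ₂ : ℝ → ℝ → ℝ)
    (hNsmooth : ContDiff ℝ (⊤ : ℕ∞) (fun p : ℝ × ℝ => N p.1 p.2))
    (hB₁smooth : ContDiff ℝ (⊤ : ℕ∞) (fun p : ℝ × ℝ => B₁ p.1 p.2))
    (hB₁B₁ : ∀ s t : ℝ, mink (B₁ s t) (B₁ s t) = 1)
    (hNN : ∀ s t : ℝ, mink (N s t) (N s t) = 0)
    (hfr₂ : ∀ s t : ℝ, deriv (fun x => N x t) s = k₂ s t • B₁ s t)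
    (hfr₃ : ∀ s t : ℝ, deriv (fun x => B₁ x t) s = k₃ s t • N s t - k₂ s t • B₂ s t)
    (hψ₁ : ∀ s t : ℝ, ψ₁ s t = mink (deriv (fun x => N s x) t) (B₁ s t))
    (hψ₂ : ∀ s t : ℝ, ψ₂ s t = mink (deriv (fun x => N s x) t) (B₂ s t)) :
    ∀ s t : ℝ, deriv (fun x => k₂ s x) t =
      deriv (fun x => ψ₁ x t) s + ψ₂ s t * k₂ s t := by
  intro s t
  have hN2 : ContDiff ℝ 2 (fun p : ℝ × ℝ => N p.1 p.2) := hNsmooth.of_le (by norm_cast)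
  have hB₁ : Differentiable ℝ (fun p : ℝ × ℝ => B₁ p.1 p.2) := hB₁smooth.differentiable (by simp)
  have hN : Differentiable ℝ (fun p : ℝ × ℝ => N p.1 p.2) := hN2.differentiable two_ne_zero
  set D := fderiv ℝ (fderiv ℝ (fun p : ℝ × ℝ => N p.1 p.2)) (s, t) (1, 0) (0, 1)
  have hk₂ : HasDerivAt (fun y => k₂ s y) (mink D (B₁ s t)) t :=
    hasDerivAt_coeff_of_eq_smul (hasDerivAt_deriv_fst_of_contDiff hN2 s t)
      (hasDerivAt_snd_of_differentiable hB₁ s t) (fun y => hfr₂ s y) (hB₁B₁ s)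
  have hNtN : mink (N s t) (deriv (fun y => N s y) t) = 0 :=
    (hasDerivAt_snd_of_differentiable hN s t).differentiableAt.hasDerivAt
      |>.mink_eq_zero_of_mink_self_const (hNN s)
  have hψ₁s : HasDerivAt (fun x => ψ₁ x t) (mink D (B₁ s t) - k₂ s t * ψ₂ s t) s := by
    have h := (hasDerivAt_deriv_snd_of_contDiff hN2 s t).mink
      (hasDerivAt_fst_of_differentiable hB₁ s t)
    rw [(hasDerivAt_fst_of_differentiable hB₁ s t).deriv.symm, hfr₃, mink_sub_right,
      mink_smul_right, mink_smul_right, mink_comm _ (N s t), hNtN, ← hψ₂] at h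
    simpa only [← hψ₁, mul_zero, zero_sub, ← sub_eq_add_neg] using h
  rw [hk₂.deriv, hψ₁s.deriv]
  ring

theorem curvature_evolution_k2_pseudo_null
    (γ T N B₁ B₂ : ℝ → ℝ → (Fin 4 → ℝ))
    (k₁ k₂ k₃ α₁ α₂ α₃ α₄ : ℝ → ℝ → ℝ)
    (ψ₁ ψ₂ : ℝ → ℝ → ℝ)
    (hγsmooth : ContDiff ℝ (⊤ : ℕ∞) (fun p : ℝ × ℝ => γ p.1 p.2))
    (hTsmooth : ContDiff ℝ (⊤ : ℕ∞) (fun p : ℝ × ℝ => T p.1 p.2))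
    (hNsmooth : ContDiff ℝ (⊤ : ℕ∞) (fun p : ℝ × ℝ => N p.1 p.2))
    (hB₁smooth : ContDiff ℝ (⊤ : ℕ∞) (fun p : ℝ × ℝ => B₁ p.1 p.2))
    (hB₂smooth : ContDiff ℝ (⊤ : ℕ∞) (fun p : ℝ × ℝ => B₂ p.1 p.2))
    (hk₂smooth : ContDiff ℝ (⊤ : ℕ∞) (fun p : ℝ × ℝ => k₂ p.1 p.2))
    (hk₃smooth : ContDiff ℝ (⊤ : ℕ∞) (fun p : ℝ × ℝ => k₃ p.1 p.2))
    (hα₁smooth : ContDiff ℝ (⊤ : ℕ∞) (fun p : ℝ × ℝ => α₁ p.1 p.2))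
    (hα₂smooth : ContDiff ℝ (⊤ : ℕ∞) (fun p : ℝ × ℝ => α₂ p.1 p.2))
    (hα₃smooth : ContDiff ℝ (⊤ : ℕ∞) (fun p : ℝ × ℝ => α₃ p.1 p.2))
    (hα₄smooth : ContDiff ℝ (⊤ : ℕ∞) (fun p : ℝ × ℝ => α₄ p.1 p.2))
    (hTT : ∀ s t : ℝ, mink (T s t) (T s t) = 1)
    (hB₁B₁ : ∀ s t : ℝ, mink (B₁ s t) (B₁ s t) = 1)
    (hNN : ∀ s t : ℝ, mink (N s t) (N s t) = 0)
    (hB₂B₂ : ∀ s t : ℝ, mink (B₂ s t) (B₂ s t) = 0)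
    (hNB₂ : ∀ s t : ℝ, mink (N s t) (B₂ s t) = 1)
    (hTN : ∀ s t : ℝ, mink (T s t) (N s t) = 0)
    (hTB₁ : ∀ s t : ℝ, mink (T s t) (B₁ s t) = 0)
    (hTB₂ : ∀ s t : ℝ, mink (T s t) (B₂ s t) = 0)
    (hNB₁ : ∀ s t : ℝ, mink (N s t) (B₁ s t) = 0)
    (hB₁B₂ : ∀ s t : ℝ, mink (B₁ s t) (B₂ s t) = 0)
    -- arclength parametrization and pseudo null Frenet equations (k₁ = 1)
    (hk₁ : ∀ s t : ℝ, k₁ s t = 1)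
    (hT : ∀ s t : ℝ, T s t = deriv (fun x => γ x t) s)
    (hunit : ∀ s t : ℝ, mnorm (deriv (fun x => γ x t) s) = 1)
    (hfr₁ : ∀ s t : ℝ, deriv (fun x => T x t) s = k₁ s t • N s t)
    (hfr₂ : ∀ s t : ℝ, deriv (fun x => N x t) s = k₂ s t • B₁ s t)
    (hfr₃ : ∀ s t : ℝ, deriv (fun x => B₁ x t) s = k₃ s t • N s t - k₂ s t • B₂ s t)
    (hfr₄ : ∀ s t : ℝ, deriv (fun x => B₂ x t) s = -(k₁ s t) • T s t - k₃ s t • B₁ s t)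
    (hflow : ∀ s t : ℝ, deriv (fun x => γ s x) t =
      α₁ s t • T s t + α₂ s t • N s t + α₃ s t • B₁ s t + α₄ s t • B₂ s t)
    -- inextensibility: ∂α₁/∂s = α₄
    (hinext : ∀ s t : ℝ, deriv (fun x => α₁ x t) s = α₄ s t)
    (hψ₁ : ∀ s t : ℝ, ψ₁ s t = mink (deriv (fun x => N s x) t) (B₁ s t))
    (hψ₂ : ∀ s t : ℝ, ψ₂ s t = mink (deriv (fun x => N s x) t) (B₂ s t)) :
    ∀ s t : ℝ, deriv (fun x => k₂ s x) t =
      deriv (fun x => ψ₁ x t) s + ψ₂ s t * k₂ s t :=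
  curvature_evolution_k2_pseudo_null_general N B₁ B₂ k₂ k₃ ψ₁ ψ₂ hNsmooth hB₁smooth hB₁B₁ hNN hfr₂
    hfr₃ hψ₁ hψ₂
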